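/- Global convergence at fixed block structure (Theorem 1, part (i)–(ii)): Let (G_j)_{j≥0} be a sequence of unit vectors in H such that for each j ≥ 1 there exist a partition P_j of the index set and a family of block unitaries (W_{j,B})_{B ∈ P_j} with the monotone-gauge property — each W_{j,B} sends the all-zeros basis vector of its block to the B-component of a family of unit block vectors attaining α_{P_j}(G_{j−1}) — and G_j is the image of G_{j−1} under the adjoint of ⊗_B W_{j,B}, with the inner product ⟨e₀, G_j⟩ real and nonnegative. Then the fidelity sequence F_j := |⟨e₀, G_j⟩|² satisfies F_j = α_{P_j}(G_{j−1})², is non-decreasing, takes values in [0, 1], and converges. -/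

import Mathlib

open scoped InnerProductSpace

noncomputable section

/-- For a partition of `ι` given as the fibers of `b : ι → κ`, the block-product vector
`p x = ∏_{k} v_k (x restricted to the block b⁻¹(k))`. -/
def blockProd {ι : Type*} [Fintype ι] [DecidableEq ι] (d : ι → ℕ)
    {κ : Type*} [Fintype κ] [DecidableEq κ] (b : ι → κ)
    (v : ∀ k : κ, EuclideanSpace ℂ (∀ i : {i : ι // b i = k}, Fin (d i.1))) :
    EuclideanSpace ℂ (∀ i, Fin (d i)) :=
  WithLp.toLp 2 (fun x => ∏ k, v k (fun i => x i.1))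

/-- The fiberwise currying equivalence. -/
def fiberEquiv {ι : Type*} (d : ι → ℕ) {κ : Type*} (b : ι → κ) :
    (∀ i, Fin (d i)) ≃ (∀ k : κ, ∀ i : {i : ι // b i = k}, Fin (d i.1)) where
  toFun x k i := x i.1
  invFun y i := y (b i) ⟨i, rfl⟩
  left_inv x := rfl
  right_inv y := by
    funext k i
    obtain ⟨i, rfl⟩ := i
    rfl

set_option maxHeartbeats 1000000 in
lemma norm_blockProd_one {ι : Type*} [Fintype ι] [DecidableEq ι] (d : ι → ℕ)
    {κ : Type*} [Fintype κ] [DecidableEq κ] (b : ι → κ)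
    (v : ∀ k : κ, EuclideanSpace ℂ (∀ i : {i : ι // b i = k}, Fin (d i.1)))
    (hv : ∀ k, ‖v k‖ = 1) : ‖blockProd d b v‖ = 1 := by
  rw [EuclideanSpace.norm_eq]
  have key : ∑ x : ∀ i, Fin (d i), ‖blockProd d b v x‖ ^ 2 = ∏ k, ‖v k‖ ^ 2 := by
    have h1 : ∀ x : ∀ i, Fin (d i),
        ‖blockProd d b v x‖ ^ 2 = ∏ k, ‖v k (fiberEquiv d b x k)‖ ^ 2 := by
      intro x
      rw [blockProd, PiLp.toLp_apply, norm_prod, ← Finset.prod_pow]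
      rfl
    simp_rw [h1]
    have h3 : ∑ x : ∀ i, Fin (d i), ∏ k, ‖v k (fiberEquiv d b x k)‖ ^ 2
        = ∑ y : ∀ k : κ, ∀ i : {i : ι // b i = k}, Fin (d i.1), ∏ k, ‖v k (y k)‖ ^ 2 :=
      Fintype.sum_equiv (fiberEquiv d b) _ _ (fun x => rfl)
    rw [h3]
    have h2 : ∀ k, ‖v k‖ ^ 2 = ∑ z, ‖v k z‖ ^ 2 := by
      intro k
      rw [EuclideanSpace.norm_eq, Real.sq_sqrt]
      positivity
    simp_rw [h2]
    rw [Finset.prod_univ_sum, Fintype.piFinset_univ]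
  rw [key]
  simp [hv]

lemma blockProd_single {ι : Type*} [Fintype ι] [DecidableEq ι] (d : ι → ℕ) [∀ i, NeZero (d i)]
    {κ : Type*} [Fintype κ] [DecidableEq κ] (b : ι → κ) :
    blockProd d b (fun k => EuclideanSpace.single (fun _ => 0) 1) =
      EuclideanSpace.single (fun i => (0 : Fin (d i))) (1 : ℂ) := by
  ext x
  rw [blockProd]
  simp only [PiLp.toLp_apply, EuclideanSpace.single_apply]
  by_cases hx : x = fun i => (0 : Fin (d i))
  · subst hx
    simp
  · rw [if_neg hx]
    have : ∃ i, x i ≠ 0 := by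
      by_contra h
      push_neg at h
      exact hx (funext h)
    obtain ⟨i, hi⟩ := this
    refine Finset.prod_eq_zero (Finset.mem_univ (b i)) ?_
    rw [if_neg]
    intro h
    exact hi (congrFun h ⟨i, rfl⟩)

/-- The partitioned entanglement eigenvalue `α_P(φ)` for the partition of `ι` given
by the fibers of `b : ι → κ`. -/
def partEntEig {ι : Type*} [Fintype ι] [DecidableEq ι] (d : ι → ℕ)
    {κ : Type*} [Fintype κ] [DecidableEq κ] (b : ι → κ)
    (φ : EuclideanSpace ℂ (∀ i, Fin (d i))) : ℝ :=
  sSup { r : ℝ | ∃ v : ∀ k : κ, EuclideanSpace ℂ (∀ i : {i : ι // b i = k}, Fin (d i.1)),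
    (∀ k, ‖v k‖ = 1) ∧ r = ‖⟪blockProd d b v, φ⟫_ℂ‖ }

/-- Global convergence at fixed block structure: for a Q-Tucker iteration with
monotone-gauge block unitaries, the fidelity sequence `F j = |⟨e₀, G j⟩|²` satisfies
`F (j+1) = α_{P (j+1)}(G j)²`, is non-decreasing, takes values in `[0,1]`, and converges. -/
theorem qtucker_global_convergence_fixed_blocks
    {ι : Type*} [Fintype ι] [DecidableEq ι] (d : ι → ℕ) [∀ i, NeZero (d i)]
    (κ : ℕ → Type) [∀ j, Fintype (κ j)] [∀ j, DecidableEq (κ j)]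
    (b : ∀ j : ℕ, ι → κ j)
    (G : ℕ → EuclideanSpace ℂ (∀ i, Fin (d i)))
    (hGnorm : ∀ j, ‖G j‖ = 1)
    -- unit block vectors attaining `α_{P_{j+1}}(G j)`
    (v : ∀ j : ℕ, ∀ k : κ (j + 1),
      EuclideanSpace ℂ (∀ i : {i : ι // b (j + 1) i = k}, Fin (d i.1)))
    (hv : ∀ j k, ‖v j k‖ = 1)
    (hattain : ∀ j, ‖⟪blockProd d (b (j + 1)) (v j), G j⟫_ℂ‖ = partEntEig d (b (j + 1)) (G j))
    -- block unitaries with the monotone-gauge property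
    (W : ∀ j : ℕ, ∀ k : κ (j + 1),
      EuclideanSpace ℂ (∀ i : {i : ι // b (j + 1) i = k}, Fin (d i.1)) ≃ₗᵢ[ℂ]
        EuclideanSpace ℂ (∀ i : {i : ι // b (j + 1) i = k}, Fin (d i.1)))
    (hgauge : ∀ j k, W j k (EuclideanSpace.single (fun _ => 0) 1) = v j k)
    -- `G (j+1)` is the image of `G j` under the adjoint of `⊗_k W j k`
    (hstep : ∀ j, ∀ x : ∀ i, Fin (d i), G (j + 1) x =
      ⟪blockProd d (b (j + 1))
        (fun k => W j k (EuclideanSpace.single (fun i => x i.1) 1)), G j⟫_ℂ)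
    -- `⟨e₀, G (j+1)⟩` is real and nonnegative
    (hreal : ∀ j, ∃ r : ℝ, 0 ≤ r ∧
      ⟪EuclideanSpace.single (fun i => (0 : Fin (d i))) (1 : ℂ), G (j + 1)⟫_ℂ = (r : ℂ))
    (F : ℕ → ℝ)
    (hF : ∀ j, F j =
      ‖⟪EuclideanSpace.single (fun i => (0 : Fin (d i))) (1 : ℂ), G j⟫_ℂ‖ ^ 2) :
    (∀ j, F (j + 1) = partEntEig d (b (j + 1)) (G j) ^ 2) ∧
    Monotone F ∧
    (∀ j, F j ∈ Set.Icc (0 : ℝ) 1) ∧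
    ∃ L : ℝ, Filter.Tendsto F Filter.atTop (nhds L) := by
  have hsucc : ∀ j, F (j + 1) = partEntEig d (b (j + 1)) (G j) ^ 2 := by
    intro j
    have h0 : ⟪EuclideanSpace.single (fun i => (0 : Fin (d i))) (1 : ℂ), G (j + 1)⟫_ℂ
        = G (j + 1) (fun i => (0 : Fin (d i))) := by
      rw [EuclideanSpace.inner_single_left]; simp
    have h1 := hstep j (fun i => (0 : Fin (d i)))
    simp only [hgauge] at h1
    rw [hF, h0, h1, hattain j]
  have hbdd1 : ∀ j, ‖⟪EuclideanSpace.single (fun i => (0 : Fin (d i))) (1 : ℂ), G j⟫_ℂ‖ ≤ 1 := by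
    intro j
    calc ‖⟪EuclideanSpace.single (fun i => (0 : Fin (d i))) (1 : ℂ), G j⟫_ℂ‖
        ≤ ‖EuclideanSpace.single (fun i => (0 : Fin (d i))) (1 : ℂ)‖ * ‖G j‖ :=
          norm_inner_le_norm _ _
      _ = 1 := by rw [EuclideanSpace.norm_single, hGnorm]; simp
  have hle : ∀ j, ‖⟪EuclideanSpace.single (fun i => (0 : Fin (d i))) (1 : ℂ), G j⟫_ℂ‖
      ≤ partEntEig d (b (j + 1)) (G j) := by
    intro j
    apply le_csSup
    · refine ⟨1, ?_⟩
      rintro r ⟨w, hw, rfl⟩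
      calc ‖⟪blockProd d (b (j + 1)) w, G j⟫_ℂ‖
          ≤ ‖blockProd d (b (j + 1)) w‖ * ‖G j‖ := norm_inner_le_norm _ _
        _ = 1 := by rw [norm_blockProd_one d (b (j + 1)) w hw, hGnorm]; simp
    · exact ⟨fun k => EuclideanSpace.single (fun _ => 0) 1,
        fun k => by rw [EuclideanSpace.norm_single]; simp,
        by rw [blockProd_single d (b (j + 1))]⟩
  have hmono : Monotone F := by
    apply monotone_nat_of_le_succ
    intro j
    rw [hsucc j, hF j]
    exact pow_le_pow_left₀ (norm_nonneg _) (hle j) 2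
  have hIcc : ∀ j, F j ∈ Set.Icc (0 : ℝ) 1 := by
    intro j
    constructor
    · rw [hF j]; positivity
    · rw [hF j]
      calc ‖⟪EuclideanSpace.single (fun i => (0 : Fin (d i))) (1 : ℂ), G j⟫_ℂ‖ ^ 2
          ≤ 1 ^ 2 := pow_le_pow_left₀ (norm_nonneg _) (hbdd1 j) 2
        _ = 1 := one_pow 2
  refine ⟨hsucc, hmono, hIcc, ?_⟩
  refine ⟨⨆ j, F j, tendsto_atTop_ciSup hmono ?_⟩
  exact ⟨1, by rintro r ⟨j, rfl⟩; exact (hIcc j).2⟩
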